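/- arXiv:2404.07140 — 2 statements merged into one kernel-verified Lean document; each statement's English description precedes it below -/
import Mathlib

section
/- For finitely-supported discrete random variables X_1,...,X_n and Y, the RSI satisfies RSI(X;Y) ≤ (n-1) log min(|𝒴|, max_j |𝒳_j|) and RSI(X;Y) ≥ -log min(|𝒴|, Π_j |𝒳_j|). -/
open Classical Finset Real

namespace HOI

/-- Distribution (pmf) of a random variable `X` on a finite sample space with mass `p`. -/
noncomputable def pdist {Ω α : Type} [Fintype Ω] (p : Ω → ℝ) (X : Ω → α) (a : α) : ℝ :=
  ∑ ω, if X ω = a then p ω else 0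

/-- Shannon entropy of a finitely-supported discrete random variable. -/
noncomputable def ent {Ω α : Type} [Fintype Ω] [Fintype α] (p : Ω → ℝ) (X : Ω → α) : ℝ :=
  ∑ a, Real.negMulLog (pdist p X a)

/-- Conditional entropy H(X|Y) = H(X,Y) - H(Y). -/
noncomputable def cent {Ω α β : Type} [Fintype Ω] [Fintype α] [Fintype β]
    (p : Ω → ℝ) (X : Ω → α) (Y : Ω → β) : ℝ :=
  ent p (fun ω => (X ω, Y ω)) - ent p Y

/-- Mutual information I(X;Y). -/
noncomputable def mi {Ω α β : Type} [Fintype Ω] [Fintype α] [Fintype β]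
    (p : Ω → ℝ) (X : Ω → α) (Y : Ω → β) : ℝ :=
  ent p X + ent p Y - ent p (fun ω => (X ω, Y ω))

/-- Conditional mutual information I(X;Y|Z). -/
noncomputable def cmi {Ω α β γ : Type} [Fintype Ω] [Fintype α] [Fintype β] [Fintype γ]
    (p : Ω → ℝ) (X : Ω → α) (Y : Ω → β) (Z : Ω → γ) : ℝ :=
  cent p X Z + cent p Y Z - cent p (fun ω => (X ω, Y ω)) Z

/-- Interaction information II(X;Y;Z) = I(X;Y) - I(X;Y|Z). -/
noncomputable def ii {Ω α β γ : Type} [Fintype Ω] [Fintype α] [Fintype β] [Fintype γ]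
    (p : Ω → ℝ) (X : Ω → α) (Y : Ω → β) (Z : Ω → γ) : ℝ :=
  mi p X Y - cmi p X Y Z

/-- Sub-vector of components of `X` with indices in `s`. -/
def subvec {Ω : Type} {n : ℕ} {α : Fin n → Type} (X : ∀ i, Ω → α i) (s : Finset (Fin n)) :
    Ω → ((i : {j // j ∈ s}) → α i.1) :=
  fun ω i => X i.1 ω

/-- The full random vector. -/
def fullvec {Ω : Type} {n : ℕ} {α : Fin n → Type} (X : ∀ i, Ω → α i) : Ω → (∀ i, α i) :=
  fun ω i => X i ω

/-- Joint entropy of the components of `X` with indices in `s`. -/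
noncomputable def vecH {Ω : Type} [Fintype Ω] {n : ℕ} {α : Fin n → Type} [∀ i, Fintype (α i)]
    (p : Ω → ℝ) (X : ∀ i, Ω → α i) (s : Finset (Fin n)) : ℝ :=
  ent p (subvec X s)

/-- Total correlation. -/
noncomputable def TC {Ω : Type} [Fintype Ω] {n : ℕ} {α : Fin n → Type} [∀ i, Fintype (α i)]
    (p : Ω → ℝ) (X : ∀ i, Ω → α i) : ℝ :=
  (∑ j, ent p (X j)) - ent p (fullvec X)

/-- Dual total correlation. -/
noncomputable def DTC {Ω : Type} [Fintype Ω] {n : ℕ} {α : Fin n → Type} [∀ i, Fintype (α i)]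
    (p : Ω → ℝ) (X : ∀ i, Ω → α i) : ℝ :=
  ent p (fullvec X) - ∑ j, (ent p (fullvec X) - vecH p X (Finset.univ \ {j}))

/-- O-information. -/
noncomputable def Oinfo {Ω : Type} [Fintype Ω] {n : ℕ} {α : Fin n → Type} [∀ i, Fintype (α i)]
    (p : Ω → ℝ) (X : ∀ i, Ω → α i) : ℝ :=
  ((n : ℝ) - 2) * ent p (fullvec X) + ∑ j, (ent p (X j) - vecH p X (Finset.univ \ {j}))

/-- Redundancy-synergy index. -/
noncomputable def RSI {Ω β : Type} [Fintype Ω] [Fintype β] {n : ℕ} {α : Fin n → Type}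
    [∀ i, Fintype (α i)] (p : Ω → ℝ) (X : ∀ i, Ω → α i) (Y : Ω → β) : ℝ :=
  (∑ j, mi p (X j) Y) - mi p (fullvec X) Y

end HOI

open HOI

/-!
Both bounds rest on `0 ≤ I(X;Y) ≤ log min(|𝒳|, |𝒴|)` and on data processing,
`I(X_j;Y) ≤ I(X;Y)`, as `X_j` is a function of `X`. The first gives `RSI ≥ -I(X;Y)`; the second
lets one term `I(X_j;Y)` cancel against `-I(X;Y)`, leaving `n - 1` terms, each at most
`log min(|𝒴|, max_j |𝒳_j|)`.

All these inequalities are instances of the log-sum inequality: `I(X;Y)` is the divergence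
`∑ r log (r / (q s))` of the joint law `r` from the product of its marginals `q`, `s`, and data
processing is the log-sum inequality on the fibres of `(x, y) ↦ (f x, y)`.
-/

namespace HOI

section Pushforward

variable {ι κ ν : Type} [Fintype ι]

lemma sum_pdist_mul [Fintype κ] (a : ι → ℝ) (g : ι → κ) (h : κ → ℝ) :
    ∑ k, pdist a g k * h k = ∑ i, a i * h (g i) := by
  simp only [pdist, Finset.sum_mul, ite_mul, zero_mul]
  rw [Finset.sum_comm]
  simp

lemma sum_pdist [Fintype κ] (a : ι → ℝ) (g : ι → κ) : ∑ k, pdist a g k = ∑ i, a i := by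
  simpa using sum_pdist_mul a g 1

lemma pdist_comp [Fintype κ] (a : ι → ℝ) (g : ι → κ) (f : κ → ν) (l : ν) :
    pdist a (fun i => f (g i)) l = pdist (pdist a g) f l := by
  simpa [pdist, mul_ite] using (sum_pdist_mul a g fun k => if f k = l then (1 : ℝ) else 0).symm

lemma pdist_id (a : ι → ℝ) (i : ι) : pdist a id i = a i := by
  simp [pdist]

lemma pdist_prod_map {ι' κ' : Type} [Fintype ι'] (a : ι → ℝ) (b : ι' → ℝ) (f : ι → κ)
    (g : ι' → κ') (k : κ) (k' : κ') :
    pdist (fun c => a c.1 * b c.2) (Prod.map f g) (k, k') = pdist a f k * pdist b g k' := by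
  simp only [pdist, Fintype.sum_prod_type, Finset.sum_mul_sum, Prod.map, Prod.mk.injEq, ite_and,
    ite_mul, mul_ite, zero_mul, mul_zero]
  exact Fintype.sum_congr _ _ fun i => by split_ifs <;> simp

variable {a : ι → ℝ}

lemma pdist_nonneg (ha : ∀ i, 0 ≤ a i) (g : ι → κ) (k : κ) : 0 ≤ pdist a g k :=
  Finset.sum_nonneg fun i _ => by split_ifs <;> simp [ha i]

lemma le_pdist_apply (ha : ∀ i, 0 ≤ a i) (g : ι → κ) (i : ι) : a i ≤ pdist a g (g i) := by
  simpa [pdist] using Finset.single_le_sum (f := fun j => if g j = g i then a j else 0)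
    (fun j _ => by split_ifs <;> simp [ha j]) (Finset.mem_univ i)

lemma pdist_le_pdist_comp [Fintype κ] (ha : ∀ i, 0 ≤ a i) (g : ι → κ) (f : κ → ν) (k : κ) :
    pdist a g k ≤ pdist a (fun i => f (g i)) (f k) := by
  rw [pdist_comp a g f]
  exact le_pdist_apply (pdist_nonneg ha g) f k

end Pushforward

section LogSum

lemma sub_le_mul_log_div {x y : ℝ} (hx : 0 ≤ x) (hy : 0 ≤ y) (hxy : y = 0 → x = 0) :
    x - y ≤ x * log (x / y) := by
  rcases hy.eq_or_lt with rfl | hy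
  · simp [hxy rfl]
  calc x - y = y * (x / y - 1) := by field_simp
    _ ≤ y * (x / y * log (x / y)) :=
        mul_le_mul_of_nonneg_left (self_sub_one_le_mul_log (div_nonneg hx hy.le)) hy.le
    _ = x * log (x / y) := by field_simp

lemma sum_mul_log_div_sum_le {ι : Type} (s : Finset ι) {a b : ι → ℝ} (ha : ∀ i ∈ s, 0 ≤ a i)
    (hb : ∀ i ∈ s, 0 ≤ b i) (hab : ∀ i ∈ s, b i = 0 → a i = 0) :
    (∑ i ∈ s, a i) * log ((∑ i ∈ s, a i) / ∑ i ∈ s, b i) ≤ ∑ i ∈ s, a i * log (a i / b i) := by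
  set A := ∑ i ∈ s, a i
  set B := ∑ i ∈ s, b i
  rcases (Finset.sum_nonneg ha).eq_or_lt with hA | hA
  · have ha0 : ∀ i ∈ s, a i = 0 := (Finset.sum_eq_zero_iff_of_nonneg ha).1 hA.symm
    rw [show A = 0 from hA.symm, zero_mul, Finset.sum_eq_zero fun i hi => by rw [ha0 i hi, zero_mul]]
  have hB : 0 < B := by
    refine (Finset.sum_nonneg hb).lt_of_ne fun hB => hA.ne' ?_
    have hb0 := (Finset.sum_eq_zero_iff_of_nonneg hb).1 hB.symm
    exact Finset.sum_eq_zero fun i hi => hab i hi (hb0 i hi)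
  have hc : 0 < A / B := div_pos hA hB
  -- compare `a` termwise with the weights `b` rescaled to the same total mass `A`
  have key : ∀ i ∈ s, a i - b i * (A / B) ≤ a i * log (a i / b i) - a i * log (A / B) := by
    intro i hi
    have h := sub_le_mul_log_div (ha i hi) (mul_nonneg (hb i hi) hc.le)
      fun h => hab i hi ((mul_eq_zero.1 h).resolve_right hc.ne')
    rcases (ha i hi).eq_or_lt with h0 | h0
    · simpa [← h0] using h
    have hbi : b i ≠ 0 := fun h' => h0.ne' (hab i hi h')
    rwa [← div_div, log_div (div_ne_zero h0.ne' hbi) hc.ne', mul_sub] at h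
  have := Finset.sum_le_sum key
  rw [Finset.sum_sub_distrib, Finset.sum_sub_distrib, ← Finset.sum_mul, ← Finset.sum_mul,
    mul_div_cancel₀ _ hB.ne', sub_self] at this
  linarith

lemma sum_pdist_mul_log_div_le {ι κ : Type} [Fintype ι] [Fintype κ] {a b : ι → ℝ}
    (ha : ∀ i, 0 ≤ a i) (hb : ∀ i, 0 ≤ b i) (hab : ∀ i, b i = 0 → a i = 0) (g : ι → κ) :
    ∑ k, pdist a g k * log (pdist a g k / pdist b g k) ≤ ∑ i, a i * log (a i / b i) := by
  rw [← Finset.sum_fiberwise Finset.univ g]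
  refine Finset.sum_le_sum fun k _ => ?_
  simpa only [pdist, ← Finset.sum_filter] using
    sum_mul_log_div_sum_le _ (fun i _ => ha i) (fun i _ => hb i) fun i _ => hab i

end LogSum

section Entropy

variable {Ω α β γ δ : Type} [Fintype Ω] [Fintype α] [Fintype β] [Fintype γ] [Fintype δ]
  {p : Ω → ℝ}

lemma ent_eq_neg_sum (X : Ω → α) : ent p X = -∑ ω, p ω * log (pdist p X (X ω)) := by
  rw [ent, ← sum_pdist_mul p X (fun a => log (pdist p X a)), ← Finset.sum_neg_distrib]
  simp only [negMulLog, neg_mul]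

lemma ent_comp_le (hp : ∀ ω, 0 ≤ p ω) (W : Ω → γ) (f : γ → α) :
    ent p (fun ω => f (W ω)) ≤ ent p W := by
  rw [ent_eq_neg_sum, ent_eq_neg_sum, neg_le_neg_iff]
  refine Finset.sum_le_sum fun ω _ => ?_
  rcases (hp ω).eq_or_lt with h0 | h0
  · simp [← h0]
  exact mul_le_mul_of_nonneg_left (log_le_log (h0.trans_le (le_pdist_apply hp W ω))
    (pdist_le_pdist_comp hp W f (W ω))) h0.le

lemma ent_le_log_card (hp : ∀ ω, 0 ≤ p ω) (hp1 : ∑ ω, p ω = 1) (X : Ω → α) :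
    ent p X ≤ log (Fintype.card α) := by
  have h := sum_mul_log_div_sum_le Finset.univ (fun a _ => pdist_nonneg hp X a)
    (fun _ _ => zero_le_one) fun _ _ h => absurd h one_ne_zero
  simp only [sum_pdist, hp1, div_one, Finset.sum_const, Finset.card_univ, nsmul_eq_mul, mul_one,
    one_mul, one_div, log_inv] at h
  rw [ent, ← neg_le_neg_iff, ← Finset.sum_neg_distrib]
  simpa only [negMulLog, neg_mul, neg_neg] using h

lemma ent_le_log_of_card_le (hp : ∀ ω, 0 ≤ p ω) (hp1 : ∑ ω, p ω = 1) (X : Ω → α) {N : ℕ}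
    (hN : Fintype.card α ≤ N) : ent p X ≤ log N := by
  refine (ent_le_log_card hp hp1 X).trans ?_
  rcases (Fintype.card α).eq_zero_or_pos with h0 | h0
  · simpa [h0] using log_natCast_nonneg N
  exact log_le_log (by exact_mod_cast h0) (by exact_mod_cast hN)

lemma mi_eq_sum_mul_log_div (hp : ∀ ω, 0 ≤ p ω) (X : Ω → α) (Y : Ω → β) :
    mi p X Y = ∑ c, pdist p (fun ω => (X ω, Y ω)) c *
      log (pdist p (fun ω => (X ω, Y ω)) c / (pdist p X c.1 * pdist p Y c.2)) := by
  have hlog : ∀ ω, p ω * log (pdist p (fun ω => (X ω, Y ω)) (X ω, Y ω) /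
      (pdist p X (X ω) * pdist p Y (Y ω))) = p ω * log (pdist p (fun ω => (X ω, Y ω)) (X ω, Y ω))
        - p ω * log (pdist p X (X ω)) - p ω * log (pdist p Y (Y ω)) := by
    intro ω
    rcases (hp ω).eq_or_lt with h0 | h0
    · simp [← h0]
    have hXY := h0.trans_le (le_pdist_apply hp (fun ω => (X ω, Y ω)) ω)
    have hX := h0.trans_le (le_pdist_apply hp X ω)
    have hY := h0.trans_le (le_pdist_apply hp Y ω)
    rw [log_div hXY.ne' (mul_pos hX hY).ne', log_mul hX.ne' hY.ne']
    ring
  rw [sum_pdist_mul p (fun ω => (X ω, Y ω)), Finset.sum_congr rfl fun ω _ => hlog ω,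
    Finset.sum_sub_distrib, Finset.sum_sub_distrib, mi, ent_eq_neg_sum, ent_eq_neg_sum,
    ent_eq_neg_sum]
  ring

lemma pdist_pair_eq_zero_of_mul_eq_zero (hp : ∀ ω, 0 ≤ p ω) (X : Ω → α) (Y : Ω → β)
    (c : α × β) (h : pdist p X c.1 * pdist p Y c.2 = 0) : pdist p (fun ω => (X ω, Y ω)) c = 0 := by
  refine le_antisymm ?_ (pdist_nonneg hp _ c)
  rcases mul_eq_zero.1 h with h | h
  · simpa [h] using pdist_le_pdist_comp hp (fun ω => (X ω, Y ω)) Prod.fst c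
  · simpa [h] using pdist_le_pdist_comp hp (fun ω => (X ω, Y ω)) Prod.snd c

lemma mi_nonneg (hp : ∀ ω, 0 ≤ p ω) (hp1 : ∑ ω, p ω = 1) (X : Ω → α) (Y : Ω → β) :
    0 ≤ mi p X Y := by
  have h := sum_mul_log_div_sum_le Finset.univ (fun c _ => pdist_nonneg hp _ c)
    (fun c _ => mul_nonneg (pdist_nonneg hp X c.1) (pdist_nonneg hp Y c.2))
    fun c _ => pdist_pair_eq_zero_of_mul_eq_zero hp X Y c
  have hb : ∑ c : α × β, pdist p X c.1 * pdist p Y c.2 = 1 := by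
    rw [Fintype.sum_prod_type, ← Finset.sum_mul_sum, sum_pdist, sum_pdist, hp1, one_mul]
  rw [hb, sum_pdist, hp1, div_one, log_one, mul_zero] at h
  rwa [mi_eq_sum_mul_log_div hp]

lemma mi_le_ent_left (hp : ∀ ω, 0 ≤ p ω) (X : Ω → α) (Y : Ω → β) : mi p X Y ≤ ent p X := by
  have := ent_comp_le hp (fun ω => (X ω, Y ω)) Prod.snd
  rw [mi]
  linarith

lemma mi_le_ent_right (hp : ∀ ω, 0 ≤ p ω) (X : Ω → α) (Y : Ω → β) : mi p X Y ≤ ent p Y := by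
  have := ent_comp_le hp (fun ω => (X ω, Y ω)) Prod.fst
  rw [mi]
  linarith

lemma mi_le_log_min (hp : ∀ ω, 0 ≤ p ω) (hp1 : ∑ ω, p ω = 1) (X : Ω → α) (Y : Ω → β)
    {M N : ℕ} (hM : Fintype.card α ≤ M) (hN : Fintype.card β ≤ N) :
    mi p X Y ≤ log (min M N : ℕ) := by
  rcases min_choice M N with h | h <;> rw [h]
  · exact (mi_le_ent_left hp X Y).trans (ent_le_log_of_card_le hp hp1 X hM)
  · exact (mi_le_ent_right hp X Y).trans (ent_le_log_of_card_le hp hp1 Y hN)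

lemma mi_comp_le (hp : ∀ ω, 0 ≤ p ω) (Z : Ω → γ) (Y : Ω → β) (f : γ → δ) :
    mi p (fun ω => f (Z ω)) Y ≤ mi p Z Y := by
  have hr : ∀ k, pdist p (fun ω => (f (Z ω), Y ω)) k
      = pdist (pdist p (fun ω => (Z ω, Y ω))) (Prod.map f id) k :=
    pdist_comp p (fun ω => (Z ω, Y ω)) (Prod.map f id)
  have hb : ∀ k : δ × β, pdist p (fun ω => f (Z ω)) k.1 * pdist p Y k.2
      = pdist (fun c => pdist p Z c.1 * pdist p Y c.2) (Prod.map f id) k := by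
    rintro ⟨u, y⟩
    rw [pdist_prod_map, pdist_comp p Z f, pdist_id]
  rw [mi_eq_sum_mul_log_div hp, mi_eq_sum_mul_log_div hp]
  simp only [hr, hb]
  exact sum_pdist_mul_log_div_le (a := pdist p (fun ω => (Z ω, Y ω)))
    (b := fun c => pdist p Z c.1 * pdist p Y c.2) (pdist_nonneg hp _)
    (fun c => mul_nonneg (pdist_nonneg hp Z c.1) (pdist_nonneg hp Y c.2))
    (pdist_pair_eq_zero_of_mul_eq_zero hp Z Y) _

end Entropy

section RedundancySynergy

variable {Ω β : Type} [Fintype Ω] [Fintype β] {n : ℕ} {α : Fin n → Type} [∀ i, Fintype (α i)]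
  {p : Ω → ℝ}

lemma neg_mi_le_RSI (hp : ∀ ω, 0 ≤ p ω) (hp1 : ∑ ω, p ω = 1) (X : ∀ i, Ω → α i) (Y : Ω → β) :
    -mi p (fullvec X) Y ≤ RSI p X Y := by
  have := Finset.sum_nonneg fun j (_ : j ∈ Finset.univ) => mi_nonneg hp hp1 (X j) Y
  rw [RSI]
  linarith

lemma RSI_le_sub_one_mul (hp : ∀ ω, 0 ≤ p ω) (hn : 0 < n) (X : ∀ i, Ω → α i) (Y : Ω → β)
    {L : ℝ} (hL : ∀ j, mi p (X j) Y ≤ L) : RSI p X Y ≤ (n - 1) * L := by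
  let j₀ : Fin n := ⟨0, hn⟩
  have hj₀ : mi p (X j₀) Y ≤ mi p (fullvec X) Y := mi_comp_le hp (fullvec X) Y fun x => x j₀
  have hcard : ((Finset.univ.erase j₀).card : ℝ) = n - 1 := by
    rw [Finset.card_erase_of_mem (Finset.mem_univ _), Finset.card_univ, Fintype.card_fin,
      Nat.cast_pred hn]
  calc RSI p X Y ≤ ∑ j ∈ Finset.univ.erase j₀, mi p (X j) Y := by
        rw [RSI, ← Finset.add_sum_erase _ _ (Finset.mem_univ j₀)]
        linarith
    _ ≤ (Finset.univ.erase j₀).card • L := Finset.sum_le_card_nsmul _ _ _ fun j _ => hL j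
    _ = (n - 1) * L := by rw [nsmul_eq_mul, hcard]

end RedundancySynergy

end HOI

/-- bounds on the RSI. -/
theorem rsi_bounds {Ω β : Type} [Fintype Ω] [Fintype β] {n : ℕ}
    {α : Fin n → Type} [∀ i, Fintype (α i)]
    (p : Ω → ℝ) (hp : ∀ ω, 0 ≤ p ω) (hp1 : ∑ ω, p ω = 1)
    (X : ∀ i, Ω → α i) (Y : Ω → β) :
    RSI p X Y ≤ ((n : ℝ) - 1) *
        Real.log ((min (Fintype.card β)
          (Finset.univ.sup fun j : Fin n => Fintype.card (α j)) : ℕ) : ℝ)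
    ∧ -Real.log ((min (Fintype.card β) (∏ j, Fintype.card (α j)) : ℕ) : ℝ)
        ≤ RSI p X Y := by
  refine ⟨?_, ?_⟩
  · rcases n.eq_zero_or_pos with rfl | hn
    · -- the bound reads `RSI ≤ -log 0 = 0`
      simpa [RSI] using mi_nonneg hp hp1 (fullvec X) Y
    refine RSI_le_sub_one_mul hp hn X Y fun j => ?_
    rw [min_comm]
    exact mi_le_log_min hp hp1 (X j) Y (Finset.le_sup (f := fun j => Fintype.card (α j))
      (Finset.mem_univ j)) le_rfl
  · refine le_trans (neg_le_neg ?_) (neg_mi_le_RSI hp hp1 X Y)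
    rw [min_comm]
    exact mi_le_log_min hp hp1 (fullvec X) Y Fintype.card_pi.le le_rfl
end

section
/- Suppose the joint distribution p of (X_1,...,X_n,Y) is tail-to-tail, i.e. X_1,...,X_n are conditionally independent given Y. Then RSI(X;Y) = TC(X) ≥ 0. -/
open Classical Finset Real

open HOI

/-! For any joint law, `RSI = TC - TC(X|Y)` with `TC(X|Y) = Σ_j H(X_j|Y) - H(X|Y)`.
Writing each entropy as an expected surprisal, `H(Z) = Σ_ω p ω · (-log P_Z(Z ω))`, the logarithm
of the conditional-independence factorisation at every sample point of positive mass makes the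
surprisals in `TC(X|Y)` cancel, so `TC(X|Y) = 0`. Finally `TC(X) ≥ 0` is Gibbs' inequality for the
joint law against the product of its marginals. -/

namespace HOI

section Distribution

variable {Ω α : Type} [Fintype Ω]

theorem pdist_nonneg_s17 {p : Ω → ℝ} (hp : ∀ ω, 0 ≤ p ω) (X : Ω → α) (a : α) :
    0 ≤ pdist p X a :=
  sum_nonneg fun ω _ => by split_ifs <;> simp [hp]

theorem le_pdist_self {p : Ω → ℝ} (hp : ∀ ω, 0 ≤ p ω) (X : Ω → α) (ω : Ω) :
    p ω ≤ pdist p X (X ω) := by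
  unfold pdist
  simpa using single_le_sum (f := fun ω' => if X ω' = X ω then p ω' else 0)
    (fun ω' _ => by split_ifs <;> simp [hp]) (mem_univ ω)

theorem pdist_le_pdist_comp_s17 {γ : Type} {p : Ω → ℝ} (hp : ∀ ω, 0 ≤ p ω) (X : Ω → α)
    (f : α → γ) (a : α) : pdist p X a ≤ pdist p (fun ω => f (X ω)) (f a) :=
  sum_le_sum fun ω _ => by
    by_cases h : X ω = a
    · simp [h]
    · rw [if_neg h]
      split_ifs <;> simp [hp]

variable [Fintype α]

theorem sum_pdist_mul_s17 (p : Ω → ℝ) (X : Ω → α) (F : α → ℝ) :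
    ∑ a, pdist p X a * F a = ∑ ω, p ω * F (X ω) := by
  simp only [pdist, sum_mul, ite_mul, zero_mul]
  rw [sum_comm]
  simp

theorem sum_pdist_s17 (p : Ω → ℝ) (X : Ω → α) : ∑ a, pdist p X a = ∑ ω, p ω := by
  simpa using sum_pdist_mul_s17 p X fun _ => 1

theorem ent_eq_sum_mul_neg_log (p : Ω → ℝ) (X : Ω → α) :
    ent p X = ∑ ω, p ω * -log (pdist p X (X ω)) := by
  rw [ent, ← sum_pdist_mul_s17 p X fun a => -log (pdist p X a)]
  simp only [negMulLog, neg_mul, mul_neg]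

end Distribution

theorem sum_negMulLog_le_sum_mul_neg_log {ι : Type} [Fintype ι] {a b : ι → ℝ}
    (ha : ∀ i, 0 ≤ a i) (hb : ∀ i, 0 ≤ b i) (hab : ∀ i, a i ≠ 0 → b i ≠ 0)
    (hsum : ∑ i, b i ≤ ∑ i, a i) :
    ∑ i, negMulLog (a i) ≤ ∑ i, a i * -log (b i) := by
  have hterm : ∀ i, negMulLog (a i) - a i * -log (b i) ≤ b i - a i := by
    intro i
    rcases (ha i).eq_or_lt with hai | hai
    · simp [← hai, hb i]
    have hbi : 0 < b i := (hb i).lt_of_ne (hab i hai.ne').symm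
    have hlog := log_le_sub_one_of_pos (div_pos hbi hai)
    rw [log_div hbi.ne' hai.ne'] at hlog
    calc negMulLog (a i) - a i * -log (b i) = a i * (log (b i) - log (a i)) := by
          rw [negMulLog]; ring
      _ ≤ a i * (b i / a i - 1) := mul_le_mul_of_nonneg_left hlog hai.le
      _ = b i - a i := by field_simp
  have := sum_le_sum fun i (_ : i ∈ univ) => hterm i
  simp only [sum_sub_distrib] at this
  linarith

section Vector

variable {Ω β : Type} [Fintype Ω] [Fintype β] {n : ℕ} {α : Fin n → Type} [∀ i, Fintype (α i)]

noncomputable def condTC (p : Ω → ℝ) (X : ∀ i, Ω → α i) (Y : Ω → β) : ℝ :=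
  (∑ j, cent p (X j) Y) - cent p (fullvec X) Y

theorem RSI_eq_TC_sub_condTC (p : Ω → ℝ) (X : ∀ i, Ω → α i) (Y : Ω → β) :
    RSI p X Y = TC p X - condTC p X Y := by
  simp only [RSI, TC, condTC, mi, cent, sum_add_distrib, sum_sub_distrib]
  ring

theorem condTC_eq_zero_of_condIndep (hn : 1 ≤ n) {p : Ω → ℝ} (hp : ∀ ω, 0 ≤ p ω)
    (X : ∀ i, Ω → α i) (Y : Ω → β)
    (htt : ∀ (x : ∀ i, α i) (y : β),
      pdist p (fun ω => (fullvec X ω, Y ω)) (x, y) * (pdist p Y y) ^ (n - 1)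
        = ∏ j, pdist p (fun ω => (X j ω, Y ω)) (x j, y)) :
    condTC p X Y = 0 := by
  have hpoint : ∀ ω, p ω * ∑ j, -log (pdist p (fun ω => (X j ω, Y ω)) (X j ω, Y ω))
      = p ω * -log (pdist p (fun ω => (fullvec X ω, Y ω)) (fullvec X ω, Y ω))
        + (n - 1 : ℝ) * (p ω * -log (pdist p Y (Y ω))) := by
    intro ω
    rcases (hp ω).eq_or_lt with hzero | hpos
    · simp [← hzero]
    have hjoint : 0 < pdist p (fun ω => (fullvec X ω, Y ω)) (fullvec X ω, Y ω) :=
      hpos.trans_le (le_pdist_self hp _ ω)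
    have hY : 0 < pdist p Y (Y ω) := hpos.trans_le (le_pdist_self hp Y ω)
    have hpair : ∀ j, pdist p (fun ω => (X j ω, Y ω)) (X j ω, Y ω) ≠ 0 :=
      fun j => (hpos.trans_le (le_pdist_self hp _ ω)).ne'
    have htt_ω : pdist p (fun ω => (fullvec X ω, Y ω)) (fullvec X ω, Y ω)
        * pdist p Y (Y ω) ^ (n - 1) = ∏ j, pdist p (fun ω => (X j ω, Y ω)) (X j ω, Y ω) := htt (fullvec X ω) (Y ω)
    have hlog := congrArg log htt_ω
    rw [log_mul hjoint.ne' (pow_ne_zero _ hY.ne'), log_pow, Nat.cast_sub hn, Nat.cast_one,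
      log_prod fun j _ => hpair j] at hlog
    rw [sum_neg_distrib, ← hlog]
    ring
  have hsum : ∑ j, ent p (fun ω => (X j ω, Y ω))
      = ent p (fun ω => (fullvec X ω, Y ω)) + (n - 1 : ℝ) * ent p Y := by
    calc ∑ j, ent p (fun ω => (X j ω, Y ω))
        = ∑ ω, p ω * ∑ j, -log (pdist p (fun ω => (X j ω, Y ω)) (X j ω, Y ω)) := by
          simp only [ent_eq_sum_mul_neg_log, mul_sum]
          exact sum_comm
      _ = _ := by
          simp only [hpoint, sum_add_distrib, ent_eq_sum_mul_neg_log, mul_sum]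
  simp only [condTC, cent, sum_sub_distrib, hsum, sum_const, card_univ, Fintype.card_fin,
    nsmul_eq_mul]
  ring

theorem TC_nonneg {p : Ω → ℝ} (hp : ∀ ω, 0 ≤ p ω) (hp1 : ∑ ω, p ω = 1) (X : ∀ i, Ω → α i) :
    0 ≤ TC p X := by
  have hjoint : ∀ x, 0 ≤ pdist p (fullvec X) x := pdist_nonneg_s17 hp _
  have hmarg : ∀ x j, pdist p (fullvec X) x ≤ pdist p (X j) (x j) :=
    fun x j => pdist_le_pdist_comp_s17 hp (fullvec X) (fun x => x j) x
  have hcross : ∑ j, ent p (X j)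
      = ∑ x, pdist p (fullvec X) x * -log (∏ j, pdist p (X j) (x j)) := by
    rw [sum_pdist_mul_s17]
    simp only [ent_eq_sum_mul_neg_log]
    rw [sum_comm]
    refine sum_congr rfl fun ω _ => ?_
    rcases (hp ω).eq_or_lt with hzero | hpos
    · simp [← hzero]
    change ∑ j, p ω * -log (pdist p (X j) (X j ω)) = p ω * -log (∏ j, pdist p (X j) (X j ω))
    rw [← mul_sum, log_prod fun j _ => (hpos.trans_le (le_pdist_self hp (X j) ω)).ne',
      sum_neg_distrib]
  have hprod : ∑ x : ∀ i, α i, ∏ j, pdist p (X j) (x j) = ∑ x, pdist p (fullvec X) x := by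
    simp [← Fintype.prod_sum, sum_pdist_s17, hp1]
  rw [TC, hcross, sub_nonneg]
  exact sum_negMulLog_le_sum_mul_neg_log hjoint
    (fun x => prod_nonneg fun j _ => pdist_nonneg_s17 hp _ _)
    (fun x hx => (prod_pos fun j _ => ((hjoint x).lt_of_ne' hx).trans_le (hmarg x j)).ne')
    hprod.le

end Vector

end HOI

/-- for tail-to-tail models, RSI = TC ≥ 0. -/
theorem rsi_tail_to_tail {Ω β : Type} [Fintype Ω] [Fintype β] {n : ℕ}
    {α : Fin n → Type} [∀ i, Fintype (α i)] (hn : 1 ≤ n)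
    (p : Ω → ℝ) (hp : ∀ ω, 0 ≤ p ω) (hp1 : ∑ ω, p ω = 1)
    (X : ∀ i, Ω → α i) (Y : Ω → β)
    (htt : ∀ (x : ∀ i, α i) (y : β),
      pdist p (fun ω => (fullvec X ω, Y ω)) (x, y) * (pdist p Y y) ^ (n - 1)
        = ∏ j, pdist p (fun ω => (X j ω, Y ω)) (x j, y)) :
    RSI p X Y = TC p X ∧ 0 ≤ TC p X := by
  rw [RSI_eq_TC_sub_condTC, condTC_eq_zero_of_condIndep hn hp X Y htt, sub_zero]
  exact ⟨rfl, TC_nonneg hp hp1 X⟩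
end
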